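/- Let A, B, x₀, P be as above with im Pᵀ = im R(A,[B x₀]), and let Q ⪰ 0, R ≻ 0 define the cost J(u) = ∫₀^∞ x(t)ᵀ Q x(t) + u(t)ᵀ R u(t) dt along solutions of ẋ = Ax + Bu, x(0) = x₀. Define Q̂ := (P†)ᵀ Q P† and the reduced cost Ĵ(u) = ∫₀^∞ ξ(t)ᵀ Q̂ ξ(t) + u(t)ᵀ R u(t) dt along ξ̇ = P A P† ξ + P B u, ξ(0) = P x₀. Then for every input u, J(u) = Ĵ(u). -/

import Mathlib

/-!
The reachable subspace `V = im Pᵀ` is `A`-invariant (Cayley–Hamilton) and contains `x₀` and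
`im B`, while `Pdag * P` is the identity on `V` and `Pdag` maps into `V`. Hence `Pdag ξ` solves
the full system with initial value `x₀`, so `x = Pdag ξ` by uniqueness of solutions, and the two
integrands agree pointwise.
-/

open Matrix MeasureTheory

/-- The reachable subspace `im R(A,[B x₀])`. -/
def reachSpan {n m : ℕ} (A : Matrix (Fin n) (Fin n) ℝ) (B : Matrix (Fin n) (Fin m) ℝ)
    (x₀ : Fin n → ℝ) : Submodule ℝ (Fin n → ℝ) :=
  Submodule.span ℝ
    ({v | ∃ i < n, v = (A ^ i) *ᵥ x₀} ∪
     {v | ∃ i < n, ∃ j : Fin m, v = (A ^ i) *ᵥ (fun k => B k j)})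

open Polynomial in
theorem Matrix.pow_mulVec_mem_span_pow_mulVec {R ι : Type*} [CommRing R] [Nontrivial R]
    [Fintype ι] [DecidableEq ι] (M : Matrix ι ι R) (k : ℕ) (w : ι → R) :
    (M ^ k) *ᵥ w ∈ Submodule.span R {v | ∃ i < Fintype.card ι, v = (M ^ i) *ᵥ w} := by
  rcases isEmpty_or_nonempty ι with hι | hι
  · rw [Subsingleton.elim ((M ^ k) *ᵥ w) 0]
    exact Submodule.zero_mem _
  have hdeg : (X ^ k %ₘ M.charpoly).natDegree < Fintype.card ι := by
    rw [← M.charpoly_natDegree_eq_dim]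
    refine natDegree_modByMonic_lt _ M.charpoly_monic fun h => Fintype.card_ne_zero (α := ι) ?_
    simpa [h] using M.charpoly_natDegree_eq_dim.symm
  rw [pow_eq_aeval_mod_charpoly, aeval_eq_sum_range' hdeg, sum_mulVec]
  refine Submodule.sum_mem _ fun i hi => ?_
  rw [smul_mulVec]
  exact Submodule.smul_mem _ _ (Submodule.subset_span ⟨i, Finset.mem_range.mp hi, rfl⟩)

section reachSpan

variable {n m : ℕ} (A : Matrix (Fin n) (Fin n) ℝ) (B : Matrix (Fin n) (Fin m) ℝ) (x₀ : Fin n → ℝ)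

theorem pow_mulVec_mem_reachSpan (k : ℕ) : (A ^ k) *ᵥ x₀ ∈ reachSpan A B x₀ := by
  have := A.pow_mulVec_mem_span_pow_mulVec k x₀
  rw [Fintype.card_fin] at this
  exact Submodule.span_mono Set.subset_union_left this

theorem pow_mulVec_col_mem_reachSpan (k : ℕ) (j : Fin m) :
    (A ^ k) *ᵥ B.col j ∈ reachSpan A B x₀ := by
  have := A.pow_mulVec_mem_span_pow_mulVec k (B.col j)
  rw [Fintype.card_fin] at this
  refine Submodule.span_mono ?_ this
  rintro _ ⟨i, hi, rfl⟩
  exact Or.inr ⟨i, hi, j, rfl⟩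

theorem start_mem_reachSpan : x₀ ∈ reachSpan A B x₀ := by
  simpa using pow_mulVec_mem_reachSpan A B x₀ 0

theorem mulVec_mem_reachSpan (w : Fin m → ℝ) : B *ᵥ w ∈ reachSpan A B x₀ := by
  have hw : B *ᵥ w ∈ LinearMap.range B.mulVecLin := ⟨w, rfl⟩
  rw [range_mulVecLin] at hw
  refine Submodule.span_le.mpr ?_ hw
  rintro _ ⟨j, rfl⟩
  simpa using pow_mulVec_col_mem_reachSpan A B x₀ 0 j

theorem mulVec_mem_reachSpan_of_mem {v : Fin n → ℝ} (hv : v ∈ reachSpan A B x₀) :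
    A *ᵥ v ∈ reachSpan A B x₀ := by
  suffices reachSpan A B x₀ ≤ (reachSpan A B x₀).comap A.mulVecLin from this hv
  refine Submodule.span_le.mpr ?_
  rintro _ (⟨i, -, rfl⟩ | ⟨i, -, j, rfl⟩) <;>
    simp only [SetLike.mem_coe, Submodule.mem_comap, mulVecLin_apply, mulVec_mulVec, ← pow_succ']
  · exact pow_mulVec_mem_reachSpan A B x₀ (i + 1)
  · exact pow_mulVec_col_mem_reachSpan A B x₀ (i + 1) j

end reachSpan

section Projection

variable {R ι κ : Type*} [CommRing R] [Fintype ι] [Fintype κ] [DecidableEq κ]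
  {P : Matrix κ ι R} {Pdag : Matrix ι κ R}

theorem mul_mulVec_eq_self_of_mem_range_transpose (hPP : P * Pdag = 1)
    (hsym : (Pdag * P)ᵀ = Pdag * P) {v : ι → R} (hv : v ∈ LinearMap.range Pᵀ.mulVecLin) :
    (Pdag * P) *ᵥ v = v := by
  obtain ⟨z, rfl⟩ := hv
  rw [mulVecLin_apply, mulVec_mulVec, ← hsym, ← transpose_mul, ← Matrix.mul_assoc, hPP,
    Matrix.one_mul]

theorem mulVec_mem_range_transpose (hPP : P * Pdag = 1) (hsym : (Pdag * P)ᵀ = Pdag * P)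
    (z : κ → R) : Pdag *ᵥ z ∈ LinearMap.range Pᵀ.mulVecLin := by
  refine ⟨(Pdagᵀ * Pdag) *ᵥ z, ?_⟩
  rw [mulVecLin_apply, mulVec_mulVec, ← Matrix.mul_assoc, ← transpose_mul, hsym,
    Matrix.mul_assoc, hPP, Matrix.mul_one]

end Projection

theorem dotProduct_transpose_mul_mul_mulVec {R ι κ : Type*} [CommSemiring R] [Fintype ι]
    [Fintype κ] (M : Matrix ι κ R) (Q : Matrix ι ι R) (z : κ → R) :
    z ⬝ᵥ ((Mᵀ * Q * M) *ᵥ z) = (M *ᵥ z) ⬝ᵥ (Q *ᵥ (M *ᵥ z)) := by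
  rw [Matrix.mul_assoc, ← mulVec_mulVec, dotProduct_mulVec, vecMul_transpose, mulVec_mulVec]

theorem eq_of_hasDerivAt_mulVec_add {ι : Type*} [Fintype ι] (A : Matrix ι ι ℝ)
    (b : ℝ → ι → ℝ) {x y : ℝ → ι → ℝ} (t₀ : ℝ)
    (hx : ∀ t, HasDerivAt x (A *ᵥ x t + b t) t) (hy : ∀ t, HasDerivAt y (A *ᵥ y t + b t) t)
    (h₀ : x t₀ = y t₀) : x = y := by
  have hLip (t : ℝ) : LipschitzWith ‖A.mulVecLin.toContinuousLinearMap‖₊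
      (fun z => A *ᵥ z + b t) := by
    simpa using A.mulVecLin.toContinuousLinearMap.lipschitz.add (LipschitzWith.const (b t))
  exact ODE_solution_unique_univ (fun t => (hLip t).lipschitzOnWith (s := Set.univ))
    (fun t => ⟨hx t, trivial⟩) (fun t => ⟨hy t, trivial⟩) h₀

theorem hasDerivAt_mulVec_of_reduced {ι κ ν : Type*} [Fintype ι] [Fintype κ] [Fintype ν]
    [DecidableEq κ] {A : Matrix ι ι ℝ} {B : Matrix ι ν ℝ} {P : Matrix κ ι ℝ}
    {Pdag : Matrix ι κ ℝ} (hPP : P * Pdag = 1) (hsym : (Pdag * P)ᵀ = Pdag * P)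
    (hA : ∀ v ∈ LinearMap.range Pᵀ.mulVecLin, A *ᵥ v ∈ LinearMap.range Pᵀ.mulVecLin)
    (hB : ∀ w, B *ᵥ w ∈ LinearMap.range Pᵀ.mulVecLin)
    {ξ : ℝ → κ → ℝ} {w : ν → ℝ} {t : ℝ}
    (hξ : HasDerivAt ξ ((P * A * Pdag) *ᵥ ξ t + (P * B) *ᵥ w) t) :
    HasDerivAt (fun s => Pdag *ᵥ ξ s) (A *ᵥ (Pdag *ᵥ ξ t) + B *ᵥ w) t := by
  have hcomp := Pdag.mulVecLin.toContinuousLinearMap.hasFDerivAt.comp_hasDerivAt t hξ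
  have hrhs : Pdag *ᵥ ((P * A * Pdag) *ᵥ ξ t + (P * B) *ᵥ w) =
      (Pdag * P) *ᵥ (A *ᵥ (Pdag *ᵥ ξ t)) + (Pdag * P) *ᵥ (B *ᵥ w) := by
    simp only [mulVec_add, mulVec_mulVec, Matrix.mul_assoc]
  rw [mul_mulVec_eq_self_of_mem_range_transpose hPP hsym
      (hA _ (mulVec_mem_range_transpose hPP hsym _)),
    mul_mulVec_eq_self_of_mem_range_transpose hPP hsym (hB w)] at hrhs
  exact hrhs ▸ hcomp

theorem stmt6_general {n m nh : ℕ}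
    (A : Matrix (Fin n) (Fin n) ℝ) (B : Matrix (Fin n) (Fin m) ℝ) (x₀ : Fin n → ℝ)
    (Q : Matrix (Fin n) (Fin n) ℝ) (R : Matrix (Fin m) (Fin m) ℝ)
    (P : Matrix (Fin nh) (Fin n) ℝ) (Pdag : Matrix (Fin n) (Fin nh) ℝ)
    (hPP : P * Pdag = 1) (hsym : (Pdag * P)ᵀ = Pdag * P)
    (hrange : LinearMap.range (Pᵀ.mulVecLin) = reachSpan A B x₀)
    (u : ℝ → Fin m → ℝ)
    (x : ℝ → Fin n → ℝ) (ξ : ℝ → Fin nh → ℝ)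
    (hx0 : x 0 = x₀)
    (hx : ∀ t : ℝ, HasDerivAt x (A *ᵥ x t + B *ᵥ u t) t)
    (hξ0 : ξ 0 = P *ᵥ x₀)
    (hξ : ∀ t : ℝ, HasDerivAt ξ ((P * A * Pdag) *ᵥ ξ t + (P * B) *ᵥ u t) t) :
    ∫ t in Set.Ioi (0 : ℝ), ((x t) ⬝ᵥ (Q *ᵥ x t) + (u t) ⬝ᵥ (R *ᵥ u t)) =
    ∫ t in Set.Ioi (0 : ℝ),
      ((ξ t) ⬝ᵥ ((Pdagᵀ * Q * Pdag) *ᵥ ξ t) + (u t) ⬝ᵥ (R *ᵥ u t)) := by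
  have hA : ∀ v ∈ LinearMap.range Pᵀ.mulVecLin, A *ᵥ v ∈ LinearMap.range Pᵀ.mulVecLin := by
    simpa only [hrange] using fun v => mulVec_mem_reachSpan_of_mem A B x₀
  have hB : ∀ w, B *ᵥ w ∈ LinearMap.range Pᵀ.mulVecLin := by
    simpa only [hrange] using mulVec_mem_reachSpan A B x₀
  have hstart : (Pdag * P) *ᵥ x₀ = x₀ :=
    mul_mulVec_eq_self_of_mem_range_transpose hPP hsym (hrange ▸ start_mem_reachSpan A B x₀)
  have hlift : x = fun t => Pdag *ᵥ ξ t :=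
    eq_of_hasDerivAt_mulVec_add A (fun t => B *ᵥ u t) 0 hx
      (fun t => hasDerivAt_mulVec_of_reduced hPP hsym hA hB (hξ t))
      (by rw [hx0, hξ0, mulVec_mulVec, hstart])
  simp only [hlift, dotProduct_transpose_mul_mul_mulVec]

/-- under the exact subspace condition `im Pᵀ = im R(A,[B x₀])`,
the full cost `J(u) = ∫₀^∞ xᵀQx + uᵀRu dt` equals the reduced cost
`Ĵ(u) = ∫₀^∞ ξᵀQ̂ξ + uᵀRu dt` with `Q̂ = (P†)ᵀQP†`, for every input `u`. -/
theorem stmt6 {n m nh : ℕ}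
    (A : Matrix (Fin n) (Fin n) ℝ) (B : Matrix (Fin n) (Fin m) ℝ) (x₀ : Fin n → ℝ)
    (Q : Matrix (Fin n) (Fin n) ℝ) (R : Matrix (Fin m) (Fin m) ℝ)
    (hQ : Q.PosSemidef) (hR : R.PosDef)
    (P : Matrix (Fin nh) (Fin n) ℝ) (Pdag : Matrix (Fin n) (Fin nh) ℝ)
    (hPP : P * Pdag = 1) (hsym : (Pdag * P)ᵀ = Pdag * P)
    (hrange : LinearMap.range (Pᵀ.mulVecLin) = reachSpan A B x₀)
    (u : ℝ → Fin m → ℝ)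
    (x : ℝ → Fin n → ℝ) (ξ : ℝ → Fin nh → ℝ)
    (hx0 : x 0 = x₀)
    (hx : ∀ t : ℝ, HasDerivAt x (A *ᵥ x t + B *ᵥ u t) t)
    (hξ0 : ξ 0 = P *ᵥ x₀)
    (hξ : ∀ t : ℝ, HasDerivAt ξ ((P * A * Pdag) *ᵥ ξ t + (P * B) *ᵥ u t) t) :
    ∫ t in Set.Ioi (0 : ℝ), ((x t) ⬝ᵥ (Q *ᵥ x t) + (u t) ⬝ᵥ (R *ᵥ u t)) =
    ∫ t in Set.Ioi (0 : ℝ),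
      ((ξ t) ⬝ᵥ ((Pdagᵀ * Q * Pdag) *ᵥ ξ t) + (u t) ⬝ᵥ (R *ᵥ u t)) :=
  stmt6_general A B x₀ Q R P Pdag hPP hsym hrange u x ξ hx0 hx hξ0 hξ
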